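/- arXiv:1606.02449 — 2 statements merged into one kernel-verified Lean document; each statement's English description precedes it below -/
import Mathlib

section
/- Let X be an infinite connected graph with bounded degree containing a Morse quasi-geodesic γ_0 which is a bi-infinite geodesic. Then there exists an increasing function φ : ℝ₊ → ℝ₊ with φ(t) → ∞ as t → ∞ such that: whenever x, y lie on γ_0, vertices x', y' satisfy d(x,x') = d(y,y') = R and d(x',y') ≥ 10R, and γ is a path from x' to y' staying outside the R-neighborhood of γ_0, then |γ| ≥ φ(R)·d(x,y). -/
/-- A bi-infinite (C,K)-quasi-geodesic path in a graph. -/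
def IsQG {V : Type*} (G : SimpleGraph V) (C K : ℝ) (γ : ℤ → V) : Prop :=
  (∀ n : ℤ, G.Adj (γ n) (γ (n+1))) ∧
  ∀ i j : ℤ, i ≤ j → ((j - i : ℤ) : ℝ) ≤ C * G.dist (γ i) (γ j) + K

/-- A finite (C,K)-quasi-geodesic path (walk). -/
def IsFinQG {V : Type*} (G : SimpleGraph V) (C K : ℝ) {u v : V} (p : G.Walk u v) : Prop :=
  ∀ i j : ℕ, i ≤ j → j ≤ p.length →
    ((j - i : ℕ) : ℝ) ≤ C * G.dist (p.getVert i) (p.getVert j) + K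

/-- A Morse quasi-geodesic. -/
def IsMorse {V : Type*} (G : SimpleGraph V) (γ : ℤ → V) : Prop :=
  (∃ C K : ℝ, 1 ≤ C ∧ 0 ≤ K ∧ IsQG G C K γ) ∧
  ∀ C K : ℝ, 1 ≤ C → 0 < K → ∃ R : ℕ, ∀ (a b : ℤ) (p : G.Walk (γ a) (γ b)),
    IsFinQG G C K p → ∀ z ∈ p.support, ∃ m : ℤ, G.dist z (γ m) ≤ R

/-! Close the detour `γ` up into a walk `B` from `x` to `y` of length `|γ| + 2R` through two
geodesics of length `R`, and shortcut `B` by geodesics until it becomes a `(C, 1)`-quasi-geodesic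
`W`. A shortcut by a geodesic of length `ℓ` removes at least `Cℓ` edges and adds at most `ℓ` new
vertices, so the set `P` of new vertices satisfies `|W| + (C - 1)|P| ≤ |B|`. By the Morse property
`W` stays within some `M < R` of `γ₀`, so for each distance strictly between `R` and `d(x, y) - R`
the vertex of `W` at that distance from `x` lies neither on `γ` nor on the two geodesics, hence
in `P`. Thus `|P| ≳ d(x, y)` and `|γ| ≳ (C - 1) d(x, y)`. As `C` is arbitrary, the ratio
`|γ| / d(x, y)` tends to infinity with `R`, and `φ` is its monotone lower envelope. -/

open Filter

namespace SimpleGraph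

variable {V : Type*} {G : SimpleGraph V}

namespace Walk

theorem dist_le_length_of_mem_support {u v z : V} (p : G.Walk u v) (hz : z ∈ p.support) :
    G.dist u z ≤ p.length := by
  classical
  exact (dist_le _).trans (p.length_takeUntil_le_length hz)

theorem exists_mem_support_dist_eq (hconn : G.Connected) (x : V) {a b : V} (w : G.Walk a b)
    {t : ℕ} (hat : G.dist x a ≤ t) (htb : t ≤ G.dist x b) :
    ∃ z ∈ w.support, G.dist x z = t := by
  induction w with
  | nil => exact ⟨_, start_mem_support _, le_antisymm hat htb⟩
  | @cons a c b hadj p ih =>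
    by_cases hat' : G.dist x a = t
    · exact ⟨a, start_mem_support _, hat'⟩
    have hc : G.dist x c ≤ G.dist x a + G.dist a c := hconn.dist_triangle
    rw [dist_eq_one_iff_adj.2 hadj] at hc
    obtain ⟨z, hz, hzt⟩ := ih (by omega) htb
    exact ⟨z, List.mem_cons_of_mem _ hz, hzt⟩

theorem dist_le_card_add (hconn : G.Connected) {x y : V} (w : G.Walk x y) (P : Finset V) (R : ℕ)
    (hw : ∀ z ∈ w.support, z ∉ P → G.dist x z ≤ R ∨ G.dist z y ≤ R) :
    G.dist x y ≤ P.card + 2 * R + 1 := by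
  classical
  have hcover : Finset.Ioo R (G.dist x y - R) ⊆ P.image (G.dist x) := by
    intro t ht
    rw [Finset.mem_Ioo] at ht
    obtain ⟨z, hz, rfl⟩ := w.exists_mem_support_dist_eq hconn x (t := t) (by simp) (by omega)
    refine Finset.mem_image_of_mem _ ?_
    by_contra hzP
    have : G.dist x y ≤ G.dist x z + G.dist z y := hconn.dist_triangle
    rcases hw z hz hzP with h | h <;> omega
  have := (Finset.card_le_card hcover).trans Finset.card_image_le
  rw [Nat.card_Ioo] at this
  omega

/-- `q` arises from `p` by repeatedly replacing a segment violating the quasi-geodesic inequality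
by a geodesic; `P` collects the vertices these geodesics add. -/
theorem exists_isFinQG_shortcut [DecidableEq V] (hconn : G.Connected) {C K : ℝ}
    (hC : 1 ≤ C) (hK : 0 ≤ K) {u v : V} (p : G.Walk u v) :
    ∃ (q : G.Walk u v) (P : Finset V), IsFinQG G C K q ∧
      (∀ z ∈ q.support, z ∈ p.support ∨ z ∈ P) ∧ q.length + (C - 1) * P.card ≤ p.length := by
  induction hn : p.length using Nat.strong_induction_on generalizing p with
  | _ n ih =>
  subst hn
  by_cases hp : IsFinQG G C K p
  · exact ⟨p, ∅, hp, fun z hz => .inl hz, by simp⟩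
  obtain ⟨i, j, hij, hj, hbad⟩ : ∃ i j : ℕ, i ≤ j ∧ j ≤ p.length ∧
      C * G.dist (p.getVert i) (p.getVert j) + K < ((j - i : ℕ) : ℝ) := by
    simpa [IsFinQG] using hp
  obtain ⟨g, hg⟩ := hconn.exists_walk_length_eq_dist (p.getVert i) (p.getVert j)
  rw [← hg] at hbad
  have hshort : C * g.length ≤ ((j - i : ℕ) : ℝ) := by linarith
  have hlt : g.length < j - i := by
    have : (g.length : ℝ) ≤ C * g.length := le_mul_of_one_le_left (by positivity) hC
    exact_mod_cast (show (g.length : ℝ) < ((j - i : ℕ) : ℝ) by linarith)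
  set p' := (p.take i).append (g.append (p.drop j))
  have hlen : p'.length + (j - i) = p.length + g.length := by
    simp only [p', length_append, take_length, drop_length]
    omega
  obtain ⟨q, P, hq, hsupp, hlenq⟩ := ih p'.length (by omega) p' rfl
  refine ⟨q, P ∪ g.support.tail.toFinset, hq, fun z hz => ?_, ?_⟩
  · rcases hsupp z hz with hz | hz
    · simp only [p', mem_support_append_iff, support_take, drop_support_eq_support_drop_min] at hz
      rcases hz with hz | hz | hz
      · exact .inl (List.mem_of_mem_take hz)
      · rw [← cons_tail_support, List.mem_cons] at hz
        rcases hz with rfl | hz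
        · exact .inl (p.getVert_mem_support i)
        · exact .inr (Finset.mem_union_right _ (List.mem_toFinset.2 hz))
      · exact .inl (List.mem_of_mem_drop hz)
    · exact .inr (Finset.mem_union_left _ hz)
  · have hcard : ((P ∪ g.support.tail.toFinset).card : ℝ) ≤ P.card + g.length := by
      have := (Finset.card_union_le P _).trans
        (Nat.add_le_add_left (List.toFinset_card_le g.support.tail) _)
      rw [List.length_tail, length_support, Nat.add_sub_cancel] at this
      exact_mod_cast this
    have hlen' : (p'.length : ℝ) + ((j - i : ℕ) : ℝ) = p.length + g.length := by
      exact_mod_cast hlen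
    nlinarith [mul_le_mul_of_nonneg_left hcard (sub_nonneg.2 hC)]

end Walk

section Detour

variable (G) in
/-- In the notation of the theorem, `x = γ₀ i` and `y = γ₀ j`. -/
def IsDetour (γ₀ : ℤ → V) (R : ℕ) (i j : ℤ) {x' y' : V} (γ : G.Walk x' y') : Prop :=
  G.dist x' (γ₀ i) = R ∧ G.dist y' (γ₀ j) = R ∧ 10 * R ≤ G.dist x' y' ∧
    ∀ z ∈ γ.support, ∀ k : ℤ, R ≤ G.dist z (γ₀ k)

variable {γ₀ : ℤ → V} {R : ℕ} {i j : ℤ} {x' y' : V} {γ : G.Walk x' y'}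

theorem IsDetour.eight_mul_le_dist (hconn : G.Connected) (h : IsDetour G γ₀ R i j γ) :
    8 * R ≤ G.dist (γ₀ i) (γ₀ j) := by
  obtain ⟨hx, hy, hxy, -⟩ := h
  have h₁ : G.dist x' y' ≤ G.dist x' (γ₀ i) + G.dist (γ₀ i) y' := hconn.dist_triangle
  have h₂ : G.dist (γ₀ i) y' ≤ G.dist (γ₀ i) (γ₀ j) + G.dist (γ₀ j) y' := hconn.dist_triangle
  rw [dist_comm (u := γ₀ j)] at h₂
  omega

theorem IsDetour.exists_walk (hconn : G.Connected) (h : IsDetour G γ₀ R i j γ) :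
    ∃ B : G.Walk (γ₀ i) (γ₀ j), B.length = γ.length + 2 * R ∧
      ∀ z ∈ B.support, G.dist (γ₀ i) z ≤ R ∨ z ∈ γ.support ∨ G.dist z (γ₀ j) ≤ R := by
  obtain ⟨w₁, hw₁⟩ := hconn.exists_walk_length_eq_dist x' (γ₀ i)
  obtain ⟨w₂, hw₂⟩ := hconn.exists_walk_length_eq_dist y' (γ₀ j)
  rw [h.1] at hw₁
  rw [h.2.1] at hw₂
  refine ⟨w₁.reverse.append (γ.append w₂), ?_, fun z hz => ?_⟩
  · simp only [Walk.length_append, Walk.length_reverse, hw₁, hw₂]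
    ring
  simp only [Walk.mem_support_append_iff] at hz
  rcases hz with hz | hz | hz
  · exact .inl (hw₁ ▸ w₁.length_reverse ▸ w₁.reverse.dist_le_length_of_mem_support hz)
  · exact .inr (.inl hz)
  · have := w₂.reverse.dist_le_length_of_mem_support (by simpa using hz)
    rw [Walk.length_reverse, hw₂, dist_comm] at this
    exact .inr (.inr this)

end Detour

end SimpleGraph

open SimpleGraph in
theorem IsMorse.exists_mul_dist_le_length_of_isDetour {V : Type*} {G : SimpleGraph V}
    {γ₀ : ℤ → V} (hconn : G.Connected) (hM : IsMorse G γ₀) (D : ℝ) :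
    ∃ R₀ : ℕ, ∀ R ≥ R₀, ∀ (i j : ℤ) (x' y' : V) (γ : G.Walk x' y'),
      IsDetour G γ₀ R i j γ → D * G.dist (γ₀ i) (γ₀ j) ≤ γ.length := by
  classical
  set m := max D 0
  obtain ⟨M, hMorse⟩ := hM.2 (2 * m + 1) 1 (by linarith [le_max_right D 0]) one_pos
  refine ⟨M + 1, fun R hR i j x' y' γ hγ => ?_⟩
  obtain ⟨B, hB, hBsupp⟩ := hγ.exists_walk hconn
  obtain ⟨W, P, hW, hWsupp, hWlen⟩ := B.exists_isFinQG_shortcut hconn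
    (C := 2 * m + 1) (by linarith [le_max_right D 0]) zero_le_one
  have hcount : G.dist (γ₀ i) (γ₀ j) ≤ P.card + 2 * R + 1 := by
    refine W.dist_le_card_add hconn P R fun z hz hzP => ?_
    obtain ⟨k, hk⟩ := hMorse i j W hW z hz
    rcases hWsupp z hz with hzB | hzP'
    · rcases hBsupp z hzB with h | h | h
      · exact .inl h
      · exact absurd (hγ.2.2.2 z h k) (by omega)
      · exact .inr h
    · exact absurd hzP' hzP
  have h8 := hγ.eight_mul_le_dist hconn
  have hdW := dist_le W
  set d := G.dist (γ₀ i) (γ₀ j)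
  have h8' : 8 * (R : ℝ) ≤ d := by exact_mod_cast h8
  have hR : (1 : ℝ) ≤ R := by exact_mod_cast (show 1 ≤ R by omega)
  have hcount' : (d : ℝ) ≤ P.card + 2 * R + 1 := by exact_mod_cast hcount
  have hdW' : (d : ℝ) ≤ W.length := by exact_mod_cast hdW
  have hB' : (B.length : ℝ) = γ.length + 2 * R := by exact_mod_cast hB
  have hm : 0 ≤ m := le_max_right D 0
  calc D * d ≤ m * d := mul_le_mul_of_nonneg_right (le_max_left D 0) (Nat.cast_nonneg d)
    _ ≤ 2 * m * (d - 2 * R - 1) := by nlinarith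
    _ ≤ 2 * m * P.card := by nlinarith
    _ ≤ γ.length := by nlinarith

theorem exists_monotone_tendsto_atTop_le_of_eventually_ge (S : ℕ → Set ℝ)
    (hS : ∀ R, ∀ r ∈ S R, 0 ≤ r) (hlarge : ∀ D, ∀ᶠ R in atTop, ∀ r ∈ S R, D ≤ r) :
    ∃ φ : ℝ → ℝ, (∀ t, 0 ≤ t → 0 ≤ φ t) ∧ Monotone φ ∧ Tendsto φ atTop atTop ∧
      ∀ (R : ℕ), ∀ r ∈ S R, φ R ≤ r := by
  -- inserting `t` avoids the junk value `sInf ∅ = 0` and gives `φ t ≤ t`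
  set T : ℝ → Set ℝ := fun t => insert t {r | ∃ R : ℕ, t ≤ R ∧ r ∈ S R}
  have hbdd : ∀ t, BddBelow (T t) := fun t => ⟨min t 0, by
    rintro r (rfl | ⟨R, -, hr⟩)
    exacts [min_le_left _ _, (min_le_right _ _).trans (hS R r hr)]⟩
  refine ⟨fun t => sInf (T t), fun t ht => Real.sInf_nonneg ?_, fun s t hst => ?_, ?_,
    fun R r hr => csInf_le (hbdd R) (Set.mem_insert_of_mem _ ⟨R, le_rfl, hr⟩)⟩
  · rintro r (rfl | ⟨R, -, hr⟩)
    exacts [ht, hS R r hr]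
  · refine le_csInf (Set.insert_nonempty _ _) ?_
    rintro r (rfl | ⟨R, htR, hr⟩)
    · exact (csInf_le (hbdd s) (Set.mem_insert _ _)).trans hst
    · exact csInf_le (hbdd s) (Set.mem_insert_of_mem _ ⟨R, hst.trans htR, hr⟩)
  · refine tendsto_atTop.2 fun b => ?_
    obtain ⟨R₀, hR₀⟩ := eventually_atTop.1 (hlarge b)
    filter_upwards [eventually_ge_atTop (max b R₀)] with t ht
    refine le_csInf (Set.insert_nonempty _ _) ?_
    rintro r (rfl | ⟨R, htR, hr⟩)
    · exact (le_max_left _ _).trans ht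
    · exact hR₀ R (by exact_mod_cast (le_max_right _ _).trans (ht.trans htR)) r hr

theorem stmt_15_general {V : Type*} (G : SimpleGraph V) (hconn : G.Connected)
    (γ₀ : ℤ → V) (hM : IsMorse G γ₀) :
    ∃ φ : ℝ → ℝ, (∀ t, 0 ≤ t → 0 ≤ φ t) ∧ Monotone φ ∧
      Filter.Tendsto φ Filter.atTop Filter.atTop ∧
      ∀ (R : ℕ) (i j : ℤ) (x' y' : V) (γ : G.Walk x' y'),
        G.dist x' (γ₀ i) = R → G.dist y' (γ₀ j) = R → 10 * R ≤ G.dist x' y' →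
        (∀ z ∈ γ.support, ∀ k : ℤ, R ≤ G.dist z (γ₀ k)) →
        φ R * (G.dist (γ₀ i) (γ₀ j) : ℝ) ≤ (γ.length : ℝ) := by
  let ratios : ℕ → Set ℝ := fun R => {r | ∃ (i j : ℤ) (x' y' : V) (γ : G.Walk x' y'),
    G.IsDetour γ₀ R i j γ ∧ 0 < G.dist (γ₀ i) (γ₀ j) ∧ r = γ.length / G.dist (γ₀ i) (γ₀ j)}
  obtain ⟨φ, hφ₀, hφmono, hφtop, hφle⟩ :=
    exists_monotone_tendsto_atTop_le_of_eventually_ge ratios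
      (fun R r ⟨_, _, _, _, _, _, _, hr⟩ => hr ▸ by positivity) fun D => by
        obtain ⟨R₀, hR₀⟩ := hM.exists_mul_dist_le_length_of_isDetour hconn D
        exact eventually_atTop.2 ⟨R₀, fun R hR r ⟨i, j, x', y', γ, hγ, hd, hr⟩ =>
          hr ▸ (le_div_iff₀ (by exact_mod_cast hd)).2 (hR₀ R hR i j x' y' γ hγ)⟩
  refine ⟨φ, hφ₀, hφmono, hφtop, fun R i j x' y' γ hx hy hxy hout => ?_⟩
  rcases Nat.eq_zero_or_pos (G.dist (γ₀ i) (γ₀ j)) with hd | hd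
  · simp [hd]
  · exact (le_div_iff₀ (by exact_mod_cast hd)).1
      (hφle R _ ⟨i, j, x', y', γ, ⟨hx, hy, hxy, hout⟩, hd, rfl⟩)

/-- Lemma lem:MQG: for a Morse bi-infinite geodesic γ₀ in an infinite
connected bounded-degree graph, there is an increasing φ with φ(t) → ∞ such that any
path γ from x' to y' with d(x,x') = d(y,y') = R (x, y on γ₀), d(x',y') ≥ 10R, staying
outside the R-neighborhood of γ₀, has |γ| ≥ φ(R)·d(x,y). -/
theorem stmt_15 {V : Type*} (G : SimpleGraph V) (hconn : G.Connected) (hinf : Infinite V)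
    (q : ℕ) (hdeg : ∀ v : V, (G.neighborSet v).ncard ≤ q)
    (γ₀ : ℤ → V) (hgeo : ∀ m n : ℤ, G.dist (γ₀ m) (γ₀ n) = (m - n).natAbs)
    (hM : IsMorse G γ₀) :
    ∃ φ : ℝ → ℝ, (∀ t, 0 ≤ t → 0 ≤ φ t) ∧ Monotone φ ∧
      Filter.Tendsto φ Filter.atTop Filter.atTop ∧
      ∀ (R : ℕ) (i j : ℤ) (x' y' : V) (γ : G.Walk x' y'),
        G.dist x' (γ₀ i) = R → G.dist y' (γ₀ j) = R → 10 * R ≤ G.dist x' y' →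
        (∀ z ∈ γ.support, ∀ k : ℤ, R ≤ G.dist z (γ₀ k)) →
        φ R * (G.dist (γ₀ i) (γ₀ j) : ℝ) ≤ (γ.length : ℝ) :=
  stmt_15_general G hconn γ₀ hM
end

section
/- Let X be a locally finite connected graph with a vertex o, and suppose for each n we are given a path γ^n from x_n to y_n, where d(o,x_n) → ∞ and d(o,y_n) → ∞, such that every γ^n passes through a fixed finite set A of vertices and each γ^n is a d_ω-geodesic. Then there exists a bi-infinite d_ω-geodesic in X, obtained as a subsequential limit of the γ^n (using that d_ω-balls are finite). -/
/-!
Each `γⁿ` visits some `a ∈ A`; along an ultrafilter on `ℕ` we may take `a` fixed. Index `γⁿ`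
by `ℤ` so that time `0` is its visit to `a`. As the endpoints escape to infinity, eventually
`γⁿ` is defined at any given time `k`, where it lies in the finite graph ball of radius `|k|`
about `a`; so along the ultrafilter its position at time `k` is eventually a constant `g k`.
Every finite window of `g` is then a window of some `γⁿ`, and subpaths of `d_ω`-geodesics are
`d_ω`-geodesics.
-/

noncomputable def dW {V : Type*} (G : SimpleGraph V) (w : Sym2 V → ℝ) (u v : V) : ENNReal :=
  ⨅ p : G.Walk u v, ENNReal.ofReal (p.edges.map w).sum

open Filter Finset

lemma Finset.sum_Ico_consecutive_int {M : Type*} [AddCommMonoid M] (f : ℤ → M)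
    {a b c : ℤ} (hab : a ≤ b) (hbc : b ≤ c) :
    ∑ k ∈ Ico a b, f k + ∑ k ∈ Ico b c, f k = ∑ k ∈ Ico a c, f k := by
  rw [← sum_union (Ico_disjoint_Ico_consecutive a b c), Ico_union_Ico_eq_Ico hab hbc]

lemma Ultrafilter.exists_eventually_eq_of_finite {ι α : Type*} (U : Ultrafilter ι) {f : ι → α}
    {s : Set α} (hs : s.Finite) (h : ∀ᶠ n in U, f n ∈ s) : ∃ a, ∀ᶠ n in U, f n = a := by
  obtain ⟨a, -, ha⟩ := (U.map f).eq_pure_of_finite_mem hs h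
  exact ⟨a, show {a} ∈ U.map f by simp [ha]⟩

namespace SimpleGraph

variable {V : Type*} {G : SimpleGraph V} {w : Sym2 V → ℝ}

lemma dW_le_walk {u v : V} (p : G.Walk u v) : dW G w u v ≤ ENNReal.ofReal (p.edges.map w).sum :=
  iInf_le _ p

lemma dW_self (u : V) : dW G w u u = 0 :=
  nonpos_iff_eq_zero.mp <| by simpa using dW_le_walk (G := G) (w := w) .nil

lemma dW_triangle (u v x : V) : dW G w u x ≤ dW G w u v + dW G w v x := by
  simp only [dW, ENNReal.iInf_add, ENNReal.add_iInf]
  refine le_iInf₂ fun q p => (dW_le_walk (p.append q)).trans ?_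
  rw [Walk.edges_append, List.map_append, List.sum_append]
  exact ENNReal.ofReal_add_le

lemma dW_le_of_adj {u v : V} (h : G.Adj u v) : dW G w u v ≤ ENNReal.ofReal (w s(u, v)) := by
  simpa using dW_le_walk (w := w) (Walk.cons h .nil)

def IsChainOn (G : SimpleGraph V) (g : ℤ → V) (i j : ℤ) : Prop :=
  ∀ k ∈ Ico i j, G.Adj (g k) (g (k + 1))

def IsGeodesicOn (G : SimpleGraph V) (w : Sym2 V → ℝ) (g : ℤ → V) (i j : ℤ) : Prop :=
  IsChainOn G g i j ∧ dW G w (g i) (g j) = ENNReal.ofReal (∑ k ∈ Ico i j, w s(g k, g (k + 1)))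

section Chain

variable {g : ℤ → V} {i j : ℤ}

lemma IsChainOn.mono {i' j' : ℤ} (h : IsChainOn G g i j) (hi : i ≤ i') (hj : j' ≤ j) :
    IsChainOn G g i' j' :=
  fun k hk => h k (Ico_subset_Ico hi hj hk)

lemma IsChainOn.sum_nonneg (hw : ∀ e ∈ G.edgeSet, 0 < w e) (h : IsChainOn G g i j) :
    0 ≤ ∑ k ∈ Ico i j, w s(g k, g (k + 1)) :=
  Finset.sum_nonneg fun k hk => (hw _ (h k hk)).le

lemma IsChainOn.dW_le (hw : ∀ e ∈ G.edgeSet, 0 < w e) (h : IsChainOn G g i j) (hij : i ≤ j) :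
    dW G w (g i) (g j) ≤ ENNReal.ofReal (∑ k ∈ Ico i j, w s(g k, g (k + 1))) := by
  induction j, hij using Int.leInduction with
  | base => simp [dW_self]
  | succ j hij ih =>
    have hj : G.Adj (g j) (g (j + 1)) := h j (by simp [hij])
    have h' : IsChainOn G g i j := h.mono le_rfl (by omega)
    rw [← sum_Ico_add_eq_sum_Ico_add_one hij, ENNReal.ofReal_add (h'.sum_nonneg hw) (hw _ hj).le]
    exact (dW_triangle _ (g j) _).trans (add_le_add (ih h') (dW_le_of_adj hj))

lemma IsChainOn.dist_le (hconn : G.Connected) (h : IsChainOn G g i j) (hij : i ≤ j) :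
    G.dist (g i) (g j) ≤ (j - i).toNat := by
  induction j, hij using Int.leInduction with
  | base => simp
  | succ j hij ih =>
    have hj : G.Adj (g j) (g (j + 1)) := h j (by simp [hij])
    have := ih (h.mono le_rfl (by omega))
    have := hconn.dist_triangle (u := g i) (v := g j) (w := g (j + 1))
    have := (dist_eq_one_iff_adj.mpr hj)
    omega

lemma IsGeodesicOn.mono (hw : ∀ e ∈ G.edgeSet, 0 < w e) {a b : ℤ} (h : IsGeodesicOn G w g a b)
    (hai : a ≤ i) (hij : i ≤ j) (hjb : j ≤ b) : IsGeodesicOn G w g i j := by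
  obtain ⟨hchain, hgeo⟩ := h
  set S : ℤ → ℤ → ℝ := fun i j => ∑ k ∈ Ico i j, w s(g k, g (k + 1))
  have hS : ∀ {i j}, a ≤ i → j ≤ b → 0 ≤ S i j := fun hi hj => (hchain.mono hi hj).sum_nonneg hw
  have hle : ∀ {i j}, a ≤ i → i ≤ j → j ≤ b → dW G w (g i) (g j) ≤ ENNReal.ofReal (S i j) :=
    fun hi hij hj => (hchain.mono hi hj).dW_le hw hij
  refine ⟨hchain.mono hai hjb, le_antisymm (hle hai hij hjb) ?_⟩
  -- a shortcut between `g i` and `g j` would give a shortcut between `g a` and `g b`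
  have htotal : S a i + S i j + S j b = S a b := by
    simp only [S]
    rw [sum_Ico_consecutive_int _ hai hij, sum_Ico_consecutive_int _ (hai.trans hij) hjb]
  have hsplit : ENNReal.ofReal (S a i) + ENNReal.ofReal (S i j) + ENNReal.ofReal (S j b)
      ≤ ENNReal.ofReal (S a i) + dW G w (g i) (g j) + ENNReal.ofReal (S j b) :=
    calc _ = ENNReal.ofReal (S a b) := by
          rw [← htotal, ENNReal.ofReal_add (add_nonneg (hS le_rfl (hij.trans hjb)) (hS hai hjb))
            (hS (hai.trans hij) le_rfl),
            ENNReal.ofReal_add (hS le_rfl (hij.trans hjb)) (hS hai hjb)]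
      _ = dW G w (g a) (g b) := hgeo.symm
      _ ≤ dW G w (g a) (g i) + dW G w (g i) (g j) + dW G w (g j) (g b) :=
          (dW_triangle _ (g j) _).trans (add_le_add_left (dW_triangle _ (g i) _) _)
      _ ≤ _ := by gcongr <;> apply hle <;> omega
  exact (ENNReal.add_le_add_iff_left ENNReal.ofReal_ne_top).mp
    ((ENNReal.add_le_add_iff_right ENNReal.ofReal_ne_top).mp hsplit)

lemma IsGeodesicOn.congr {g' : ℤ → V} (h : IsGeodesicOn G w g i j) (hij : i ≤ j)
    (hg : ∀ k ∈ Icc i j, g k = g' k) : IsGeodesicOn G w g' i j := by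
  have hg' : ∀ k ∈ Ico i j, g k = g' k ∧ g (k + 1) = g' (k + 1) := fun k hk => by
    rw [mem_Ico] at hk
    exact ⟨hg k (by rw [mem_Icc]; omega), hg (k + 1) (by rw [mem_Icc]; omega)⟩
  refine ⟨fun k hk => ?_, ?_⟩
  · rw [← (hg' k hk).1, ← (hg' k hk).2]
    exact h.1 k hk
  · rw [← hg i (by simp [hij]), ← hg j (by simp [hij]), h.2]
    congr 1
    exact sum_congr rfl fun k hk => by rw [(hg' k hk).1, (hg' k hk).2]

lemma IsGeodesicOn.comp_add_right {c : ℤ} (h : IsGeodesicOn G w g (i + c) (j + c)) :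
    IsGeodesicOn G w (fun k => g (k + c)) i j := by
  refine ⟨fun k hk => ?_, ?_⟩
  · simpa [add_right_comm k 1 c] using h.1 (k + c) (by simpa using hk)
  · simp only [add_right_comm _ (1 : ℤ) c]
    rw [sum_Ico_add' (fun k => w s(g k, g (k + 1)))]
    exact h.2

lemma IsChainOn.dist_le_natAbs (hconn : G.Connected) {k l : ℤ}
    (h : IsChainOn G g i j) (hk : k ∈ Icc i j) (hl : l ∈ Icc i j) :
    G.dist (g k) (g l) ≤ (l - k).natAbs := by
  rw [mem_Icc] at hk hl
  rcases le_total k l with hkl | hlk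
  · exact ((h.mono hk.1 hl.2).dist_le hconn hkl).trans (by omega)
  · rw [dist_comm]
    exact ((h.mono hl.1 hk.2).dist_le hconn hlk).trans (by omega)

end Chain

namespace Walk

variable {u v : V}

def toChain (p : G.Walk u v) : ℤ → V := fun k => p.getVert k.toNat

lemma sum_getVert (p : G.Walk u v) :
    (p.edges.map w).sum = ∑ k ∈ range p.length, w s(p.getVert k, p.getVert (k + 1)) := by
  induction p with
  | nil => simp
  | cons h q ih =>
    rw [edges_cons, List.map_cons, List.sum_cons, length_cons, sum_range_succ', ih, add_comm]
    simp

lemma isChainOn_toChain (p : G.Walk u v) : IsChainOn G p.toChain 0 p.length := fun k hk => by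
  rw [mem_Ico] at hk
  simpa [toChain, show (k + 1).toNat = k.toNat + 1 by omega] using
    p.adj_getVert_succ (show k.toNat < p.length by omega)

lemma isGeodesicOn_toChain (p : G.Walk u v)
    (hgeo : ENNReal.ofReal (p.edges.map w).sum = dW G w u v) :
    IsGeodesicOn G w p.toChain 0 p.length :=
  ⟨p.isChainOn_toChain, by simp [toChain, ← hgeo, sum_getVert, Int.Ico_eq_finset_map]⟩

lemma dist_getVert_le (hconn : G.Connected) (p : G.Walk u v) {i j : ℕ} (hij : i ≤ j)
    (hj : j ≤ p.length) : G.dist (p.getVert i) (p.getVert j) ≤ j - i := by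
  simpa [toChain] using
    (p.isChainOn_toChain.mono (Nat.cast_nonneg i) (Nat.cast_le.mpr hj)).dist_le hconn
      (Nat.cast_le.mpr hij)

end Walk

lemma finite_setOf_dist_le (hconn : G.Connected) (hlf : ∀ v : V, (G.neighborSet v).Finite)
    (a : V) (k : ℕ) : {v | G.dist a v ≤ k}.Finite := by
  induction k with
  | zero => simp [hconn.dist_eq_zero_iff]
  | succ k ih =>
    refine (ih.union (ih.biUnion fun u _ => hlf u)).subset fun v hv => ?_
    obtain ⟨p, hp⟩ := hconn.exists_walk_length_eq_dist v a
    cases p with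
    | nil => exact .inl (by simp)
    | cons h q =>
      refine .inr (Set.mem_biUnion (show _ ∈ {v | G.dist a v ≤ k} from ?_) h.symm)
      have := dist_le q
      rw [Set.mem_ofPred_eq, dist_comm] at hv ⊢
      simp only [Walk.length_cons] at hp
      omega

lemma eventually_le_and_add_le_length (hconn : G.Connected) {l : Filter ℕ} {x y : ℕ → V}
    (p : ∀ n, G.Walk (x n) (y n)) {t : ℕ → ℕ} (ht : ∀ n, t n ≤ (p n).length) {o a : V}
    (ha : ∀ᶠ n in l, (p n).getVert (t n) = a)
    (hx : Tendsto (fun n => G.dist o (x n)) l atTop)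
    (hy : Tendsto (fun n => G.dist o (y n)) l atTop) (M : ℕ) :
    ∀ᶠ n in l, M ≤ t n ∧ t n + M ≤ (p n).length := by
  filter_upwards [ha, hx.eventually_ge_atTop (M + G.dist o a),
    hy.eventually_ge_atTop (M + G.dist o a)] with n han hxn hyn
  have hxa := (p n).dist_getVert_le hconn (Nat.zero_le _) (ht n)
  have hay := (p n).dist_getVert_le hconn (ht n) le_rfl
  have hox := hconn.dist_triangle (u := o) (v := a) (w := x n)
  have hoy := hconn.dist_triangle (u := o) (v := a) (w := y n)
  simp only [han, Walk.getVert_zero, Walk.getVert_length] at hxa hay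
  rw [dist_comm] at hxa
  have := ht n
  omega

end SimpleGraph

open SimpleGraph

theorem stmt_19_general {V : Type*} (G : SimpleGraph V) (hconn : G.Connected)
    (hlf : ∀ v : V, (G.neighborSet v).Finite)
    (o : V) (w : Sym2 V → ℝ) (hw : ∀ e ∈ G.edgeSet, 0 < w e)
    (x y : ℕ → V) (p : ∀ n, G.Walk (x n) (y n))
    (hx : Filter.Tendsto (fun n => G.dist o (x n)) Filter.atTop Filter.atTop)
    (hy : Filter.Tendsto (fun n => G.dist o (y n)) Filter.atTop Filter.atTop)
    (A : Set V) (hA : A.Finite) (hApass : ∀ n, ∃ z ∈ (p n).support, z ∈ A)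
    (hgeo : ∀ n, ENNReal.ofReal (((p n).edges.map w).sum) = dW G w (x n) (y n)) :
    ∃ g : ℤ → V, (∀ n : ℤ, G.Adj (g n) (g (n+1))) ∧
      ∀ i j : ℤ, i ≤ j → dW G w (g i) (g j)
        = ENNReal.ofReal (∑ k ∈ Finset.Ico i j, w s(g k, g (k+1))) := by
  let U : Ultrafilter ℕ := hyperfilter ℕ
  have hU : (U : Filter ℕ) ≤ atTop := Nat.hyperfilter_le_atTop
  have hvisit : ∀ n, ∃ t ≤ (p n).length, (p n).getVert t ∈ A := fun n => by
    obtain ⟨z, hz, hzA⟩ := hApass n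
    obtain ⟨t, rfl, ht⟩ := Walk.mem_support_iff_exists_getVert.mp hz
    exact ⟨t, ht, hzA⟩
  choose t ht_len ht_A using hvisit
  obtain ⟨a, ha⟩ := U.exists_eventually_eq_of_finite hA (.of_forall ht_A)
  have hwindow := eventually_le_and_add_le_length hconn p ht_len ha (hx.mono_left hU)
    (hy.mono_left hU)
  let f : ℕ → ℤ → V := fun n k => (p n).toChain (k + t n)
  have hf : ∀ i j, i ≤ j → ∀ᶠ n in U, IsGeodesicOn G w (f n) i j := fun i j hij =>
    (hwindow (i.natAbs + j.natAbs)).mono fun n hn =>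
      (((p n).isGeodesicOn_toChain (hgeo n)).mono hw (by omega) (by omega)
        (by omega)).comp_add_right
  have hball : ∀ k, ∀ᶠ n in U, f n k ∈ {v | G.dist a v ≤ k.natAbs} := fun k => by
    filter_upwards [ha, hf (-k.natAbs) k.natAbs (by omega)] with n han hn
    have := hn.1.dist_le_natAbs hconn (k := 0) (l := k) (by simp) (by rw [mem_Icc]; omega)
    simpa [f, Walk.toChain, han] using this
  choose g hg using fun k =>
    U.exists_eventually_eq_of_finite (finite_setOf_dist_le hconn hlf a k.natAbs) (hball k)
  have hgeoG : ∀ i j, i ≤ j → IsGeodesicOn G w g i j := fun i j hij => by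
    obtain ⟨n, hn, hfg⟩ :=
      ((hf i j hij).and ((eventually_all_finset (Icc i j)).2 fun k _ => hg k)).exists
    exact hn.congr hij hfg
  exact ⟨g, fun n => (hgeoG n (n + 1) (by omega)).1 n (by simp),
    fun i j hij => (hgeoG i j hij).2⟩

/-- if d_ω-geodesics γⁿ between points x_n, y_n going to infinity all
pass through a fixed finite set A, and d_ω-balls are finite, then a subsequential
limit yields a bi-infinite d_ω-geodesic (a bi-infinite path all of whose finite
subpaths are d_ω-geodesics). -/
theorem stmt_19 {V : Type*} (G : SimpleGraph V) (hconn : G.Connected)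
    (hlf : ∀ v : V, (G.neighborSet v).Finite)
    (o : V) (w : Sym2 V → ℝ) (hw : ∀ e ∈ G.edgeSet, 0 < w e)
    (hballs : ∀ (u : V) (M : ℝ), {v : V | dW G w u v ≤ ENNReal.ofReal M}.Finite)
    (x y : ℕ → V) (p : ∀ n, G.Walk (x n) (y n))
    (hx : Filter.Tendsto (fun n => G.dist o (x n)) Filter.atTop Filter.atTop)
    (hy : Filter.Tendsto (fun n => G.dist o (y n)) Filter.atTop Filter.atTop)
    (A : Set V) (hA : A.Finite) (hApass : ∀ n, ∃ z ∈ (p n).support, z ∈ A)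
    (hgeo : ∀ n, ENNReal.ofReal (((p n).edges.map w).sum) = dW G w (x n) (y n)) :
    ∃ g : ℤ → V, (∀ n : ℤ, G.Adj (g n) (g (n+1))) ∧
      ∀ i j : ℤ, i ≤ j → dW G w (g i) (g j)
        = ENNReal.ofReal (∑ k ∈ Finset.Ico i j, w s(g k, g (k+1))) :=
  stmt_19_general G hconn hlf o w hw x y p hx hy A hA hApass hgeo
end
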